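/- Suppose the safe rank SR is defined by ρ̂(o_m, W_{i-1}\qo) + (N − SR + 1)/|W_i| ≥ ρ̂(o_{m+1}, W_{i-1}) + Δ↑, where ρ̂(o_m, W_{i-1}\qo) is a lower bound on ρ̂(o,W_{i-1}\qo) for every o in the previous top-m set R_{i-1}, Δ↑ upper-bounds every object's gain relative to W_{i-1}, and ρ̂(o', W_i) ≤ ρ̂(o_{m+1},W_{i-1}) + Δ↑ for all o' ∉ R_{i-1}. If an object o ∈ R_{i-1} satisfies r̂(o,qn) ≤ SR and o satisfies the constraint of qn (so its contribution from qn is (N − r̂(o,qn) + 1)/|W_i|, added to ρ̂(o,W_{i-1}\qo)), then ρ̂(o, W_i) ≥ ρ̂(o', W_i) for every object o' ∉ R_{i-1}; hence o remains in the top-m of window W_i. -/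

import Mathlib

theorem stmt10_general {ι : Type*} (R : Finset ι)
    (N w SR Δup ρm ρm1 : ℝ) (hw : 1 ≤ w)
    (ρpartial ρcur : ι → ℝ) (rhat : ℝ)
    (hSR : ρm1 + Δup ≤ ρm + (N - SR + 1) / w)
    (hout : ∀ o' ∉ R, ρcur o' ≤ ρm1 + Δup)
    (o : ι)
    (hlb : ρm ≤ ρpartial o)
    (hrhat : rhat ≤ SR)
    (hcur : ρcur o = ρpartial o + (N - rhat + 1) / w) :
    ∀ o' ∉ R, ρcur o' ≤ ρcur o := by
  intro o' ho'
  have hgain : (N - SR + 1) / w ≤ (N - rhat + 1) / w :=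
    div_le_div_of_nonneg_right (by linarith) (by linarith)
  calc ρcur o' ≤ ρm1 + Δup := hout o' ho'
    _ ≤ ρm + (N - SR + 1) / w := hSR
    _ ≤ ρpartial o + (N - rhat + 1) / w := add_le_add hlb hgain
    _ = ρcur o := hcur.symm

/-- with the safe rank `SR` satisfying
`ρ̂(o_m,W_{i-1}\qo) + (N − SR + 1)/|W_i| ≥ ρ̂(o_{m+1},W_{i-1}) + Δ↑`, any previous
result object `o ∈ R` with `r̂(o,qn) ≤ SR` that satisfies the constraint of `qn`
has `ρ̂(o,W_i) ≥ ρ̂(o',W_i)` for every `o' ∉ R`, hence remains a top-`m` object. -/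
theorem stmt10 {ι : Type*} (R : Finset ι)
    (N w SR Δup ρm ρm1 : ℝ) (hw : 1 ≤ w)
    (ρpartial ρcur : ι → ℝ) (rhat : ℝ)
    (hSR : ρm1 + Δup ≤ ρm + (N - SR + 1) / w)
    (hout : ∀ o' ∉ R, ρcur o' ≤ ρm1 + Δup)
    (o : ι) (ho : o ∈ R)
    (hlb : ρm ≤ ρpartial o)
    (hrhat : rhat ≤ SR)
    (hcur : ρcur o = ρpartial o + (N - rhat + 1) / w) :
    ∀ o' ∉ R, ρcur o' ≤ ρcur o :=
  stmt10_general R N w SR Δup ρm ρm1 hw ρpartial ρcur rhat hSR hout o hlb hrhat hcur
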